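/- arXiv:1909.13771 — 2 statements merged into one kernel-verified Lean document; each statement's English description precedes it below -/
import Mathlib

section
/- For all p ∈ [0,1], the maximal 1-independent connectivity function of the 4-cycle satisfies F_{1,C₄}(p) = 2p − p² for p ∈ [2/3, 1], and F_{1,C₄}(p) = 2p² for p ∈ [0, 2/3]. -/
open MeasureTheory ProbabilityTheory

namespace OneIndep

variable {V : Type*}

/-- The configuration space of a bond percolation model on `G`: each edge of `G` is
either open (`true`) or closed (`false`). A configuration is identified with the
spanning subgraph consisting of its open edges. -/
abbrev Config (G : SimpleGraph V) : Type _ := G.edgeSet → Bool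

/-- The set of endpoints of edges belonging to an edge set `F`. -/
def endpointsOf (F : Set (Sym2 V)) : Set V := {v | ∃ e ∈ F, v ∈ e}

/-- Two edge sets are `k`-distant in `G` if they are disjoint and every walk in `G` from an
endpoint of an edge of `F₁` to an endpoint of an edge of `F₂` has length at least `k`.
For `k = 1` this says precisely that `F₁` and `F₂` are disjoint and no edge of `F₁` shares
an endpoint with an edge of `F₂`. -/
def KDistant (G : SimpleGraph V) (k : ℕ) (F₁ F₂ : Set (Sym2 V)) : Prop :=
  Disjoint F₁ F₂ ∧
    ∀ u ∈ endpointsOf F₁, ∀ v ∈ endpointsOf F₂, ∀ w : G.Walk u v, k ≤ w.length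

/-- The sub-σ-algebra of the configuration space generated by the states of the edges
belonging to `F`. -/
def cylinderSigma (G : SimpleGraph V) (F : Set (Sym2 V)) : MeasurableSpace (Config G) :=
  MeasurableSpace.comap (fun ω (e : {e : G.edgeSet // (e : Sym2 V) ∈ F}) => ω e) inferInstance

/-- A measure on the configuration space of `G` is `k`-independent if the states of any two
`k`-distant edge sets are independent. -/
def KIndepMeasure (G : SimpleGraph V) (k : ℕ) (μ : Measure (Config G)) : Prop :=
  ∀ F₁ F₂ : Set (Sym2 V), F₁ ⊆ G.edgeSet → F₂ ⊆ G.edgeSet → KDistant G k F₁ F₂ →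
    Indep (cylinderSigma G F₁) (cylinderSigma G F₂) μ

/-- `MGe G k p` is the collection of `k`-independent bond percolation measures on `G` in which
every edge is open with probability at least `p`. -/
def MGe (G : SimpleGraph V) (k : ℕ) (p : ℝ) : Set (Measure (Config G)) :=
  {μ | IsProbabilityMeasure μ ∧ KIndepMeasure G k μ ∧
    ∀ e : G.edgeSet, ENNReal.ofReal p ≤ μ {ω | ω e = true}}

/-- `MLe G k p` is the collection of `k`-independent bond percolation measures on `G` in which
every edge is open with probability at most `p`. -/
def MLe (G : SimpleGraph V) (k : ℕ) (p : ℝ) : Set (Measure (Config G)) :=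
  {μ | IsProbabilityMeasure μ ∧ KIndepMeasure G k μ ∧
    ∀ e : G.edgeSet, μ {ω | ω e = true} ≤ ENNReal.ofReal p}

/-- The spanning subgraph of `G` consisting of the open edges of the configuration `ω`. -/
def openSubgraph (G : SimpleGraph V) (ω : Config G) : SimpleGraph V :=
  SimpleGraph.fromEdgeSet {e | ∃ h : e ∈ G.edgeSet, ω ⟨e, h⟩ = true}

/-- Percolation: the open subgraph contains an infinite connected component. -/
def Percolates (G : SimpleGraph V) (ω : Config G) : Prop :=
  ∃ v : V, {w | (openSubgraph G ω).Reachable v w}.Infinite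

/-- The Harris critical probability for 1-independent percolation on `G`. -/
noncomputable def harrisCrit (G : SimpleGraph V) : ℝ :=
  sInf {p | p ∈ Set.Icc (0:ℝ) 1 ∧ ∀ μ ∈ MGe G 1 p, μ {ω | Percolates G ω} = 1}

/-- The open subgraph contains a path of length `n`. -/
def HasOpenPathOfLength (G : SimpleGraph V) (ω : Config G) (n : ℕ) : Prop :=
  ∃ (u v : V) (w : (openSubgraph G ω).Walk u v), w.IsPath ∧ w.length = n

/-- The long paths critical probability for 1-independent percolation on `G`. -/
noncomputable def longPathsCrit (G : SimpleGraph V) : ℝ :=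
  sInf {p | p ∈ Set.Icc (0:ℝ) 1 ∧
    ∀ μ ∈ MGe G 1 p, ∀ n : ℕ, 0 < μ {ω | HasOpenPathOfLength G ω n}}

/-- The `k`-independent connectivity function `f_{k,G}(p)`: the infimum over all
`k`-independent measures with edge-probability at least `p` of the probability that the
random spanning subgraph is connected. -/
noncomputable def connFun (G : SimpleGraph V) (k : ℕ) (p : ℝ) : ℝ :=
  sInf {x | ∃ μ ∈ MGe G k p, x = (μ {ω | (openSubgraph G ω).Connected}).toReal}

/-- The maximal `k`-independent connectivity function `F_{k,G}(p)`: the supremum over all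
`k`-independent measures with edge-probability at most `p` of the probability that the
random spanning subgraph is connected. -/
noncomputable def connFunMax (G : SimpleGraph V) (k : ℕ) (p : ℝ) : ℝ :=
  sSup {x | ∃ μ ∈ MLe G k p, x = (μ {ω | (openSubgraph G ω).Connected}).toReal}

/-- The line lattice `ℤ`: the two-way infinite path. -/
def lineLattice : SimpleGraph ℤ := SimpleGraph.fromRel (fun x y => y = x + 1)

/-- The hypercubic lattice `ℤ^d`. -/
def hypercubicLattice (d : ℕ) : SimpleGraph (Fin d → ℤ) :=
  SimpleGraph.fromRel (fun x y => ∑ i, (x i - y i).natAbs = 1)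

/-- The square lattice `ℤ²`. -/
def squareLattice : SimpleGraph (ℤ × ℤ) :=
  SimpleGraph.fromRel (fun x y => (x.1 - y.1).natAbs + (x.2 - y.2).natAbs = 1)


/-!
Opposite edges of `C₄` are 1-distant, so under a 1-independent measure their states are
independent. An open subgraph of `C₄` is connected iff at most one edge is closed. Hence a
connected configuration has `s(0,1)` or `s(2,3)` open, so `P(connected) ≤ 1 - (1 - p)²`, and it
has both edges of `{s(0,1), s(2,3)}` or both edges of `{s(1,2), s(3,0)}` open, so
`P(connected) ≤ 2p²`.

Both bounds are attained by exchangeable measures, whose mass at a configuration depends only on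
its number of open edges. The only 1-distant pairs of nonempty edge sets of `C₄` are pairs of
opposite edges, so such a measure is 1-independent as soon as any two edges are both open with
probability `p²`. Putting as much mass as possible on configurations with at least three open
edges under this constraint and edge density `p` gives weights that are nonnegative, and attain
the bounds, for `p ≥ 2/3` (`highWeight`) and for `p ≤ 2/3` (`lowWeight`).
-/

lemma _root_.ProbabilityTheory.IndepSet.measure_compl_inter_compl {Ω : Type*}
    [MeasurableSpace Ω] {μ : Measure Ω} {s t : Set Ω} (h : IndepSet s t μ) :
    μ (sᶜ ∩ tᶜ) = μ sᶜ * μ tᶜ :=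
  (Indep_iff _ _ μ).1 h _ _
    (MeasurableSpace.measurableSet_generateFrom (Set.mem_singleton _)).compl
    (MeasurableSpace.measurableSet_generateFrom (Set.mem_singleton _)).compl

section Independence

variable {G : SimpleGraph V} {k : ℕ} {μ : Measure (Config G)}

lemma kDistant_one_iff {F₁ F₂ : Set (Sym2 V)} :
    KDistant G 1 F₁ F₂ ↔ Disjoint (endpointsOf F₁) (endpointsOf F₂) := by
  refine ⟨fun h => Set.disjoint_left.2 fun v hv₁ hv₂ => ?_, fun h => ⟨?_, ?_⟩⟩
  · simpa using h.2 v hv₁ v hv₂ .nil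
  · refine Set.disjoint_left.2 fun e he₁ he₂ => ?_
    induction e using Sym2.ind with
    | _ x y =>
      exact Set.disjoint_left.1 h ⟨_, he₁, Sym2.mem_mk_left x y⟩ ⟨_, he₂, Sym2.mem_mk_left x y⟩
  · intro u hu v hv w
    refine Nat.one_le_iff_ne_zero.2 fun hw => Set.disjoint_left.1 h hu ?_
    rwa [SimpleGraph.Walk.eq_of_length_eq_zero hw]

lemma cylinderSigma_empty : cylinderSigma G ∅ = ⊥ := by
  have : (fun (ω : Config G) (e : {e : G.edgeSet // (e : Sym2 V) ∈ (∅ : Set (Sym2 V))}) => ω e) =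
      fun _ e => (Set.notMem_empty _ e.2).elim := by
    funext ω e
    exact (Set.notMem_empty _ e.2).elim
  rw [cylinderSigma, this, MeasurableSpace.comap_const]

lemma cylinderSigma_singleton (e : G.edgeSet) :
    cylinderSigma G {(e : Sym2 V)} = MeasurableSpace.generateFrom {{ω | ω e = true}} := by
  refine le_antisymm (Measurable.comap_le ?_) (MeasurableSpace.generateFrom_le ?_)
  · refine @measurable_pi_lambda _ _ _ (MeasurableSpace.generateFrom _) _ _ fun f => ?_
    rw [show f.1 = e from Subtype.ext f.2]
    exact @measurable_to_bool _ (MeasurableSpace.generateFrom _) _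
      (MeasurableSpace.measurableSet_generateFrom rfl)
  · rintro _ rfl
    exact ⟨_, measurable_pi_apply
      (⟨e, rfl⟩ : {f : G.edgeSet // (f : Sym2 V) ∈ ({(e : Sym2 V)} : Set (Sym2 V))})
      (measurableSet_singleton true), rfl⟩

lemma measurableSet_setOf_open (e : G.edgeSet) : MeasurableSet {ω : Config G | ω e = true} :=
  measurableSet_eq_fun (measurable_pi_apply e) measurable_const

lemma KIndepMeasure.indepSet (hμ : KIndepMeasure G k μ)
    {e f : G.edgeSet} (hef : KDistant G k {(e : Sym2 V)} {(f : Sym2 V)}) :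
    IndepSet {ω | ω e = true} {ω | ω f = true} μ := by
  have := hμ _ _ (by simp) (by simp) hef
  rwa [cylinderSigma_singleton, cylinderSigma_singleton] at this

lemma kIndepMeasure_of_kDistant_singletons [IsProbabilityMeasure μ]
    (hG : ∀ F₁ F₂ : Set (Sym2 V), F₁ ⊆ G.edgeSet → F₂ ⊆ G.edgeSet → KDistant G k F₁ F₂ →
      F₁.Nonempty → F₂.Nonempty → ∃ e f : G.edgeSet, F₁ = {(e : Sym2 V)} ∧ F₂ = {(f : Sym2 V)})
    (hμ : ∀ e f : G.edgeSet, KDistant G k {(e : Sym2 V)} {(f : Sym2 V)} →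
      μ ({ω | ω e = true} ∩ {ω | ω f = true}) = μ {ω | ω e = true} * μ {ω | ω f = true}) :
    KIndepMeasure G k μ := by
  intro F₁ F₂ h₁ h₂ hd
  rcases F₁.eq_empty_or_nonempty with rfl | hn₁
  · simpa [cylinderSigma_empty] using indep_bot_left _
  rcases F₂.eq_empty_or_nonempty with rfl | hn₂
  · simpa [cylinderSigma_empty] using indep_bot_right _
  obtain ⟨e, f, rfl, rfl⟩ := hG F₁ F₂ h₁ h₂ hd hn₁ hn₂
  rw [cylinderSigma_singleton, cylinderSigma_singleton]
  exact (indepSet_iff_measure_inter_eq_mul (measurableSet_setOf_open e)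
    (measurableSet_setOf_open f) μ).2 (hμ e f hd)

variable {p : ℝ}

lemma measure_le_of_subset_open_or_open (hμ : μ ∈ MLe G k p) (hp₀ : 0 ≤ p) (hp₁ : p ≤ 1)
    {e f : G.edgeSet} (hef : KDistant G k {(e : Sym2 V)} {(f : Sym2 V)}) {S : Set (Config G)}
    (hS : S ⊆ {ω | ω e = true ∨ ω f = true}) : μ S ≤ ENNReal.ofReal (1 - (1 - p) ^ 2) := by
  obtain ⟨_, hk, hle⟩ := hμ
  have closed_ge (e : G.edgeSet) : ENNReal.ofReal (1 - p) ≤ μ {ω | ω e = true}ᶜ := by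
    rw [prob_compl_eq_one_sub (measurableSet_setOf_open e),
      ENNReal.ofReal_sub _ hp₀, ENNReal.ofReal_one]
    exact tsub_le_tsub_left (hle e) 1
  have hS' : S ⊆ ({ω | ω e = true}ᶜ ∩ {ω | ω f = true}ᶜ)ᶜ := fun ω hω => by
    simpa [or_iff_not_and_not] using hS hω
  calc μ S ≤ μ ({ω | ω e = true}ᶜ ∩ {ω | ω f = true}ᶜ)ᶜ := measure_mono hS'
    _ = 1 - μ {ω | ω e = true}ᶜ * μ {ω | ω f = true}ᶜ := by
      rw [prob_compl_eq_one_sub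
        ((measurableSet_setOf_open e).compl.inter (measurableSet_setOf_open f).compl),
        (hk.indepSet hef).measure_compl_inter_compl]
    _ ≤ 1 - ENNReal.ofReal (1 - p) * ENNReal.ofReal (1 - p) :=
      tsub_le_tsub_left (mul_le_mul' (closed_ge e) (closed_ge f)) 1
    _ = ENNReal.ofReal (1 - (1 - p) ^ 2) := by
      rw [← ENNReal.ofReal_mul (by linarith), ← sq, ENNReal.ofReal_sub _ (sq_nonneg _),
        ENNReal.ofReal_one]

lemma measure_le_of_subset_union_open_inter_open (hμ : μ ∈ MLe G k p) (hp₀ : 0 ≤ p)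
    {e₁ f₁ e₂ f₂ : G.edgeSet} (h₁ : KDistant G k {(e₁ : Sym2 V)} {(f₁ : Sym2 V)})
    (h₂ : KDistant G k {(e₂ : Sym2 V)} {(f₂ : Sym2 V)}) {S : Set (Config G)}
    (hS : S ⊆ {ω | ω e₁ = true ∧ ω f₁ = true} ∪ {ω | ω e₂ = true ∧ ω f₂ = true}) :
    μ S ≤ ENNReal.ofReal (2 * p ^ 2) := by
  obtain ⟨-, hk, hle⟩ := hμ
  calc μ S ≤ μ ({ω | ω e₁ = true} ∩ {ω | ω f₁ = true}) +
        μ ({ω | ω e₂ = true} ∩ {ω | ω f₂ = true}) :=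
      (measure_mono hS).trans (measure_union_le _ _)
    _ = μ {ω | ω e₁ = true} * μ {ω | ω f₁ = true} +
        μ {ω | ω e₂ = true} * μ {ω | ω f₂ = true} := by
      rw [(hk.indepSet h₁).measure_inter_eq_mul, (hk.indepSet h₂).measure_inter_eq_mul]
    _ ≤ ENNReal.ofReal p * ENNReal.ofReal p + ENNReal.ofReal p * ENNReal.ofReal p := by
      gcongr <;> apply hle
    _ = ENNReal.ofReal (2 * p ^ 2) := by
      rw [← ENNReal.ofReal_mul hp₀, ← ENNReal.ofReal_add (by positivity) (by positivity)]
      ring_nf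

end Independence

lemma connFunMax_eq_of_forall_le_of_exists_eq {G : SimpleGraph V} {k : ℕ} {p x : ℝ} (hx : 0 ≤ x)
    (hle : ∀ μ ∈ MLe G k p, μ {ω | (openSubgraph G ω).Connected} ≤ ENNReal.ofReal x)
    (hμ : ∃ μ ∈ MLe G k p, μ {ω | (openSubgraph G ω).Connected} = ENNReal.ofReal x) :
    connFunMax G k p = x := by
  obtain ⟨μ, hμ, hμx⟩ := hμ
  refine IsGreatest.csSup_eq ⟨⟨μ, hμ, by rw [hμx, ENNReal.toReal_ofReal hx]⟩, ?_⟩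
  rintro _ ⟨μ', hμ', rfl⟩
  exact ENNReal.toReal_le_of_le_ofReal hx (hle μ' hμ')

lemma openSubgraph_eq_deleteEdges {G : SimpleGraph V} (ω : Config G) :
    openSubgraph G ω = G.deleteEdges (Subtype.val '' {e | ω e = false}) := by
  ext u v
  simp only [openSubgraph, SimpleGraph.fromEdgeSet_adj, SimpleGraph.deleteEdges_adj,
    Set.mem_image, Subtype.exists, exists_and_right, exists_eq_right, not_exists]
  constructor
  · rintro ⟨⟨h, hω⟩, -⟩
    exact ⟨h, fun h' => by simp [hω]⟩
  · rintro ⟨h, hω⟩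
    exact ⟨⟨h, by simpa using hω h⟩, h.ne⟩

section Exchangeable

open Finset

variable {α : Type*} [Fintype α] [DecidableEq α]

lemma sum_filter_superset_apply_card {β : Type*} [AddCommMonoid β] (T : Finset α) (f : ℕ → β) :
    ∑ s with T ⊆ s, f #s =
      ∑ k ∈ range (Fintype.card α - #T + 1), (Fintype.card α - #T).choose k • f (k + #T) := by
  have : ∑ s with T ⊆ s, f #s = ∑ t ∈ Tᶜ.powerset, f (#t + #T) := by
    refine sum_nbij' (· \ T) (· ∪ T) (fun s _ => ?_) (fun t _ => ?_) (fun s hs => ?_)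
      (fun t ht => ?_) (fun s hs => ?_)
    · simp [subset_iff]
    · simp
    · exact sdiff_union_of_subset (mem_filter.1 hs).2
    · exact union_sdiff_cancel_right (subset_compl_iff_disjoint_right.1 (mem_powerset.1 ht))
    · rw [card_sdiff_add_card_eq_card (mem_filter.1 hs).2]
  rw [this, sum_powerset_apply_card (fun m => f (m + #T)), card_compl]

noncomputable def exchangeableMeasure (c : ℕ → ℝ) : Measure (α → Bool) :=
  ∑ s : Finset α, ENNReal.ofReal (c #s) • Measure.dirac (fun a => decide (a ∈ s))

variable {c : ℕ → ℝ}

lemma exchangeableMeasure_apply (hc : ∀ k, 0 ≤ c k) (S : Set (α → Bool))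
    [DecidablePred (· ∈ S)] :
    exchangeableMeasure c S = ENNReal.ofReal (∑ s with (fun a => decide (a ∈ s)) ∈ S, c #s) := by
  rw [exchangeableMeasure, Measure.finsetSum_apply, sum_filter,
    ENNReal.ofReal_sum_of_nonneg fun s _ => by split_ifs; exacts [hc _, le_rfl]]
  refine sum_congr rfl fun s _ => ?_
  rw [Measure.smul_apply, Measure.dirac_apply]
  split_ifs with h <;> simp [h]

lemma exchangeableMeasure_setOf_forall_mem (hc : ∀ k, 0 ≤ c k) (T : Finset α) :
    exchangeableMeasure c {ω | ∀ a ∈ T, ω a = true} = ENNReal.ofReal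
      (∑ k ∈ range (Fintype.card α - #T + 1), (Fintype.card α - #T).choose k * c (k + #T)) := by
  rw [exchangeableMeasure_apply hc]
  simp_rw [Set.mem_ofPred_eq, decide_eq_true_eq, ← subset_iff, sum_filter_superset_apply_card,
    nsmul_eq_mul]

lemma exchangeableMeasure_setOf_card (hc : ∀ k, 0 ≤ c k) (P : ℕ → Prop) [DecidablePred P] :
    exchangeableMeasure c {ω : α → Bool | P #{a | ω a = true}} = ENNReal.ofReal
      (∑ k ∈ range (Fintype.card α + 1), if P k then (Fintype.card α).choose k * c k else 0) := by
  rw [exchangeableMeasure_apply hc]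
  simp_rw [Set.mem_ofPred_eq, decide_eq_true_eq, filter_mem_eq_inter, univ_inter, sum_filter,
    ← powerset_univ, sum_powerset_apply_card (fun k => if P k then c k else 0), card_univ,
    nsmul_eq_mul, mul_ite, mul_zero]

end Exchangeable

open Finset in
lemma subsingleton_setOf_eq_false_iff_card_le {α : Type*} [Fintype α] (ω : α → Bool) :
    {a | ω a = false}.Subsingleton ↔ Fintype.card α ≤ #{a | ω a = true} + 1 := by
  rw [← Finset.card_univ, ← Finset.card_filter_add_card_filter_not (fun a => ω a = true),
    add_le_add_iff_left, Finset.card_le_one]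
  simp [Set.Subsingleton]

section CycleGraphFour

open SimpleGraph Finset

local notation "e₀₁" => (⟨s(0, 1), by decide⟩ : Set.Elem (edgeSet (cycleGraph 4)))
local notation "e₁₂" => (⟨s(1, 2), by decide⟩ : Set.Elem (edgeSet (cycleGraph 4)))
local notation "e₂₃" => (⟨s(2, 3), by decide⟩ : Set.Elem (edgeSet (cycleGraph 4)))
local notation "e₃₀" => (⟨s(3, 0), by decide⟩ : Set.Elem (edgeSet (cycleGraph 4)))
local notation "ν" => exchangeableMeasure (α := edgeSet (cycleGraph 4))

lemma cycleGraph_four_card_edgeSet : Fintype.card (cycleGraph 4).edgeSet = 4 := by decide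

lemma cycleGraph_four_deleteEdges_singleton_connected :
    ∀ e ∈ (cycleGraph 4).edgeSet, ((cycleGraph 4).deleteEdges {e}).Connected := by
  decide

lemma cycleGraph_four_deleteEdges_pair_not_connected :
    ∀ e ∈ (cycleGraph 4).edgeSet, ∀ f ∈ (cycleGraph 4).edgeSet, e ≠ f →
      ¬ ((cycleGraph 4).deleteEdges {e, f}).Connected := by
  decide

lemma cycleGraph_four_edge_meets_of_disjoint :
    ∀ e ∈ (cycleGraph 4).edgeSet, ∀ f ∈ (cycleGraph 4).edgeSet, ∀ g ∈ (cycleGraph 4).edgeSet,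
      (∀ v ∈ e, v ∉ f) → g ≠ e → ∃ v ∈ g, v ∈ f := by
  decide

lemma cycleGraph_four_connected_iff (ω : Config (cycleGraph 4)) :
    (openSubgraph (cycleGraph 4) ω).Connected ↔ {e | ω e = false}.Subsingleton := by
  rw [openSubgraph_eq_deleteEdges]
  refine ⟨fun hc e he f hf => by_contra fun hne => ?_, fun h => ?_⟩
  · refine cycleGraph_four_deleteEdges_pair_not_connected e e.2 f f.2
      (Subtype.coe_injective.ne hne) (hc.mono (deleteEdges_anti ?_))
    exact Set.insert_subset_iff.2 ⟨⟨e, he, rfl⟩, Set.singleton_subset_iff.2 ⟨f, hf, rfl⟩⟩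
  · obtain ⟨e₀, he₀⟩ : ∃ e₀ : (cycleGraph 4).edgeSet, {e | ω e = false} ⊆ {e₀} := by
      rcases h.eq_empty_or_singleton with h' | ⟨e₀, h'⟩
      · exact ⟨e₀₁, by simp [h']⟩
      · exact ⟨e₀, h'.le⟩
    refine (cycleGraph_four_deleteEdges_singleton_connected e₀ e₀.2).mono (deleteEdges_anti ?_)
    simpa using Set.image_mono (f := Subtype.val) he₀

lemma cycleGraph_four_connected_iff_card (ω : Config (cycleGraph 4)) :
    (openSubgraph (cycleGraph 4) ω).Connected ↔ 3 ≤ #{e | ω e = true} := by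
  rw [cycleGraph_four_connected_iff, subsingleton_setOf_eq_false_iff_card_le,
    cycleGraph_four_card_edgeSet]
  omega

lemma cycleGraph_four_eq_singleton_of_disjoint_endpointsOf {F₁ F₂ : Set (Sym2 (Fin 4))}
    (h₁ : F₁ ⊆ (cycleGraph 4).edgeSet) (h₂ : F₂ ⊆ (cycleGraph 4).edgeSet)
    (hd : Disjoint (endpointsOf F₁) (endpointsOf F₂)) {e f : Sym2 (Fin 4)} (he : e ∈ F₁)
    (hf : f ∈ F₂) : F₁ = {e} := by
  refine Set.eq_singleton_iff_unique_mem.2 ⟨he, fun g hg => by_contra fun hne => ?_⟩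
  obtain ⟨v, hvg, hvf⟩ := cycleGraph_four_edge_meets_of_disjoint e (h₁ he) f (h₂ hf) g (h₁ hg)
    (fun v hve hvf => Set.disjoint_left.1 hd ⟨e, he, hve⟩ ⟨f, hf, hvf⟩) hne
  exact Set.disjoint_left.1 hd ⟨g, hg, hvg⟩ ⟨f, hf, hvf⟩

lemma cycleGraph_four_kDistant_eq_singletons {F₁ F₂ : Set (Sym2 (Fin 4))}
    (h₁ : F₁ ⊆ (cycleGraph 4).edgeSet) (h₂ : F₂ ⊆ (cycleGraph 4).edgeSet)
    (hd : KDistant (cycleGraph 4) 1 F₁ F₂) (hn₁ : F₁.Nonempty) (hn₂ : F₂.Nonempty) :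
    ∃ e f : (cycleGraph 4).edgeSet, F₁ = {(e : Sym2 (Fin 4))} ∧ F₂ = {(f : Sym2 (Fin 4))} := by
  rw [kDistant_one_iff] at hd
  obtain ⟨e, he⟩ := hn₁
  obtain ⟨f, hf⟩ := hn₂
  exact ⟨⟨e, h₁ he⟩, ⟨f, h₂ hf⟩,
    cycleGraph_four_eq_singleton_of_disjoint_endpointsOf h₁ h₂ hd he hf,
    cycleGraph_four_eq_singleton_of_disjoint_endpointsOf h₂ h₁ hd.symm hf he⟩

lemma cycleGraph_four_kDistant_opposite :
    KDistant (cycleGraph 4) 1 {s(0, 1)} {s(2, 3)} ∧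
      KDistant (cycleGraph 4) 1 {s(1, 2)} {s(3, 0)} := by
  simp only [kDistant_one_iff, endpointsOf, Set.mem_singleton_iff, exists_eq_left,
    Set.disjoint_left, Set.mem_ofPred_eq]
  decide

lemma cycleGraph_four_open_or_open_of_connected {ω : Config (cycleGraph 4)}
    (h : (openSubgraph (cycleGraph 4) ω).Connected) : ω e₀₁ = true ∨ ω e₂₃ = true := by
  rw [cycleGraph_four_connected_iff] at h
  by_contra hne
  simp only [not_or, Bool.not_eq_true] at hne
  exact absurd (h hne.1 hne.2) (by decide)

lemma cycleGraph_four_opposite_open_of_connected {ω : Config (cycleGraph 4)}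
    (h : (openSubgraph (cycleGraph 4) ω).Connected) :
    (ω e₀₁ = true ∧ ω e₂₃ = true) ∨ (ω e₁₂ = true ∧ ω e₃₀ = true) := by
  rw [cycleGraph_four_connected_iff] at h
  by_contra hne
  simp only [not_or, not_and_or, Bool.not_eq_true] at hne
  obtain ⟨h₁ | h₁, h₂ | h₂⟩ := hne <;> exact absurd (h h₁ h₂) (by decide)

variable {p : ℝ}

lemma cycleGraph_four_measure_connected_le_two_mul_sub_sq {μ : Measure (Config (cycleGraph 4))}
    (hμ : μ ∈ MLe (cycleGraph 4) 1 p) (hp₀ : 0 ≤ p) (hp₁ : p ≤ 1) :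
    μ {ω | (openSubgraph (cycleGraph 4) ω).Connected} ≤ ENNReal.ofReal (2 * p - p ^ 2) := by
  refine (measure_le_of_subset_open_or_open hμ hp₀ hp₁ cycleGraph_four_kDistant_opposite.1
    fun _ => cycleGraph_four_open_or_open_of_connected).trans_eq ?_
  congr 1
  ring

lemma cycleGraph_four_measure_connected_le_two_mul_sq {μ : Measure (Config (cycleGraph 4))}
    (hμ : μ ∈ MLe (cycleGraph 4) 1 p) (hp₀ : 0 ≤ p) :
    μ {ω | (openSubgraph (cycleGraph 4) ω).Connected} ≤ ENNReal.ofReal (2 * p ^ 2) :=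
  measure_le_of_subset_union_open_inter_open hμ hp₀ cycleGraph_four_kDistant_opposite.1
    cycleGraph_four_kDistant_opposite.2 fun _ => cycleGraph_four_opposite_open_of_connected

variable {c : ℕ → ℝ}

lemma cycleGraph_four_exchangeableMeasure_univ (hc : ∀ k, 0 ≤ c k) :
    ν c Set.univ = ENNReal.ofReal (c 0 + 4 * c 1 + 6 * c 2 + 4 * c 3 + c 4) := by
  have := exchangeableMeasure_setOf_forall_mem hc (∅ : Finset (cycleGraph 4).edgeSet)
  rw [cycleGraph_four_card_edgeSet] at this
  simpa [sum_range_succ, Nat.choose, add_assoc] using this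

lemma cycleGraph_four_exchangeableMeasure_open (hc : ∀ k, 0 ≤ c k) (e : (cycleGraph 4).edgeSet) :
    ν c {ω | ω e = true} = ENNReal.ofReal (c 1 + 3 * c 2 + 3 * c 3 + c 4) := by
  have := exchangeableMeasure_setOf_forall_mem hc {e}
  rw [cycleGraph_four_card_edgeSet] at this
  simpa [sum_range_succ, Nat.choose, add_assoc] using this

lemma cycleGraph_four_exchangeableMeasure_open_inter_open (hc : ∀ k, 0 ≤ c k)
    {e f : (cycleGraph 4).edgeSet} (hef : e ≠ f) :
    ν c ({ω | ω e = true} ∩ {ω | ω f = true}) = ENNReal.ofReal (c 2 + 2 * c 3 + c 4) := by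
  have := exchangeableMeasure_setOf_forall_mem hc {e, f}
  rw [cycleGraph_four_card_edgeSet, card_pair hef] at this
  convert this using 2
  · ext; simp
  · simp [sum_range_succ, Nat.choose, add_assoc]

lemma cycleGraph_four_exchangeableMeasure_connected (hc : ∀ k, 0 ≤ c k) :
    ν c {ω | (openSubgraph (cycleGraph 4) ω).Connected} = ENNReal.ofReal (4 * c 3 + c 4) := by
  have := exchangeableMeasure_setOf_card (α := (cycleGraph 4).edgeSet) hc (3 ≤ ·)
  rw [cycleGraph_four_card_edgeSet] at this
  simp_rw [cycleGraph_four_connected_iff_card]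
  simpa [sum_range_succ, Nat.choose] using this

lemma cycleGraph_four_exchangeableMeasure_mem_MLe (hc : ∀ k, 0 ≤ c k) (hp₀ : 0 ≤ p)
    (h_univ : c 0 + 4 * c 1 + 6 * c 2 + 4 * c 3 + c 4 = 1)
    (h_open : c 1 + 3 * c 2 + 3 * c 3 + c 4 = p) (h_pair : c 2 + 2 * c 3 + c 4 = p ^ 2) :
    ν c ∈ MLe (cycleGraph 4) 1 p := by
  have : IsProbabilityMeasure (ν c) :=
    ⟨by rw [cycleGraph_four_exchangeableMeasure_univ hc, h_univ, ENNReal.ofReal_one]⟩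
  refine ⟨this, kIndepMeasure_of_kDistant_singletons
    (fun _ _ => cycleGraph_four_kDistant_eq_singletons) fun e f hef => ?_,
    fun e => by rw [cycleGraph_four_exchangeableMeasure_open hc, h_open]⟩
  have hne : e ≠ f := fun h => Set.disjoint_singleton.1 hef.1 (congrArg _ h)
  rw [cycleGraph_four_exchangeableMeasure_open_inter_open hc hne,
    cycleGraph_four_exchangeableMeasure_open hc, cycleGraph_four_exchangeableMeasure_open hc,
    h_open, h_pair, ← ENNReal.ofReal_mul hp₀, sq]

end CycleGraphFour

section Extremal

open SimpleGraph

local notation "ν" => exchangeableMeasure (α := edgeSet (cycleGraph 4))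

noncomputable def highWeight (p : ℝ) : ℕ → ℝ
  | 0 => (1 - p) ^ 2
  | 3 => p * (1 - p)
  | 4 => 3 * p ^ 2 - 2 * p
  | _ => 0

noncomputable def lowWeight (p : ℝ) : ℕ → ℝ
  | 0 => (1 - 2 * p) ^ 2
  | 1 => p - 3 * p ^ 2 / 2
  | 3 => p ^ 2 / 2
  | _ => 0

variable {p : ℝ}

lemma highWeight_nonneg (h : 2 / 3 ≤ p) (hp₁ : p ≤ 1) (k : ℕ) : 0 ≤ highWeight p k := by
  unfold highWeight
  split <;> nlinarith

lemma lowWeight_nonneg (hp₀ : 0 ≤ p) (h : p ≤ 2 / 3) (k : ℕ) : 0 ≤ lowWeight p k := by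
  unfold lowWeight
  split <;> nlinarith

lemma cycleGraph_four_highWeight (h : 2 / 3 ≤ p) (hp₁ : p ≤ 1) :
    ν (highWeight p) ∈ MLe (cycleGraph 4) 1 p ∧
      ν (highWeight p) {ω | (openSubgraph (cycleGraph 4) ω).Connected} =
        ENNReal.ofReal (2 * p - p ^ 2) := by
  have hc := highWeight_nonneg h hp₁
  refine ⟨cycleGraph_four_exchangeableMeasure_mem_MLe hc (by linarith) ?_ ?_ ?_,
    (cycleGraph_four_exchangeableMeasure_connected hc).trans (congrArg _ ?_)⟩
  all_goals simp only [highWeight]; ring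

lemma cycleGraph_four_lowWeight (hp₀ : 0 ≤ p) (h : p ≤ 2 / 3) :
    ν (lowWeight p) ∈ MLe (cycleGraph 4) 1 p ∧
      ν (lowWeight p) {ω | (openSubgraph (cycleGraph 4) ω).Connected} =
        ENNReal.ofReal (2 * p ^ 2) := by
  have hc := lowWeight_nonneg hp₀ h
  refine ⟨cycleGraph_four_exchangeableMeasure_mem_MLe hc hp₀ ?_ ?_ ?_,
    (cycleGraph_four_exchangeableMeasure_connected hc).trans (congrArg _ ?_)⟩
  all_goals simp only [lowWeight]; ring

end Extremal

theorem connFunMax_cycleGraph_four (p : ℝ) (hp : p ∈ Set.Icc (0:ℝ) 1) :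
    (2 / 3 ≤ p → connFunMax (SimpleGraph.cycleGraph 4) 1 p = 2 * p - p ^ 2) ∧
    (p ≤ 2 / 3 → connFunMax (SimpleGraph.cycleGraph 4) 1 p = 2 * p ^ 2) := by
  obtain ⟨hp₀, hp₁⟩ := hp
  refine ⟨fun h => connFunMax_eq_of_forall_le_of_exists_eq (by nlinarith)
      (fun μ hμ => cycleGraph_four_measure_connected_le_two_mul_sub_sq hμ hp₀ hp₁)
      ⟨_, cycleGraph_four_highWeight h hp₁⟩,
    fun h => connFunMax_eq_of_forall_le_of_exists_eq (by positivity)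
      (fun μ hμ => cycleGraph_four_measure_connected_le_two_mul_sq hμ hp₀)
      ⟨_, cycleGraph_four_lowWeight hp₀ h⟩⟩

end OneIndep
end

section
/- For every integer n ≥ 6 and every p ∈ [0,1], the 1-independent connectivity function of the n-cycle satisfies f_{1,C_n}(p) ≥ (np − (n−2))/2. -/
open MeasureTheory ProbabilityTheory

/-!
Every cycle of length at least three is 2-edge-connected, so its open subgraph can only be
disconnected when at least two edges are closed. Markov's inequality for the number of closed
edges, whose expectation is at most `n (1 - p)`, bounds the probability of that event by
`n (1 - p) / 2`.
-/

open Finset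

namespace SimpleGraph

theorem cycleGraph_isEdgeConnected_two (n : ℕ) : (cycleGraph (n + 3)).IsEdgeConnected 2 := by
  have hsupp : ∀ v, v ∈ (cycleGraph.cycle n).support := by
    intro v
    have hv : (cycleGraph.cycle n).getVert (n + 3 - v) = v := by
      rw [cycleGraph.getVert_cycle (by omega)]
      ext
      simp [Nat.sub_sub_self v.isLt.le, Nat.mod_eq_of_lt v.isLt]
    exact hv ▸ Walk.getVert_mem_support _ _
  exact fun u v => cycleGraph.isCycle_cycle.isTrail.isEdgeReachable_two (hsupp u) (hsupp v)

theorem card_edgeFinset_cycleGraph (n : ℕ) : #(cycleGraph (n + 3)).edgeFinset = n + 3 := by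
  have h := (cycleGraph (n + 3)).sum_degrees_eq_twice_card_edges
  simp only [cycleGraph_degree_three_le, sum_const, card_univ, Fintype.card_fin, smul_eq_mul] at h
  omega

end SimpleGraph

theorem ProbabilityTheory.indep_dirac {Ω : Type*} (m₁ m₂ : MeasurableSpace Ω)
    {_ : MeasurableSpace Ω} [MeasurableSingletonClass Ω] (x : Ω) :
    Indep m₁ m₂ (Measure.dirac x) := by
  refine (Indep_iff _ _ _).2 fun s t _ _ => ?_
  by_cases hs : x ∈ s <;> by_cases ht : x ∈ t <;> simp [hs, ht]

open scoped ENNReal in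
theorem MeasureTheory.two_mul_measureReal_le_sum {Ω ι : Type*} [MeasurableSpace Ω] [Fintype ι]
    (μ : Measure Ω) [IsFiniteMeasure μ] {A : ι → Set Ω} (hA : ∀ i, MeasurableSet (A i)) :
    2 * μ.real {ω | {i | ω ∈ A i}.Nontrivial} ≤ ∑ i, μ.real (A i) := by
  classical
  set N : Ω → ℝ≥0∞ := fun ω => ∑ i, (A i).indicator 1 ω
  have hN : {ω | {i | ω ∈ A i}.Nontrivial} ⊆ {ω | 2 ≤ N ω} := by
    rintro ω ⟨i, hi : ω ∈ A i, j, hj : ω ∈ A j, hij⟩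
    calc (2 : ℝ≥0∞) = ∑ k ∈ {i, j}, (A k).indicator 1 ω := by
          simp only [sum_pair hij, Set.indicator_of_mem hi, Set.indicator_of_mem hj, Pi.one_apply]
          norm_num
      _ ≤ N ω := sum_le_sum_of_subset (subset_univ _)
  have hNm : Measurable N := Finset.measurable_sum _ fun i _ => measurable_one.indicator (hA i)
  have key : 2 * μ {ω | {i | ω ∈ A i}.Nontrivial} ≤ ∑ i, μ (A i) :=
    calc 2 * μ {ω | {i | ω ∈ A i}.Nontrivial} ≤ 2 * μ {ω | 2 ≤ N ω} := by gcongr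
      _ ≤ ∫⁻ ω, N ω ∂μ := mul_meas_ge_le_lintegral₀ hNm.aemeasurable 2
      _ = ∑ i, μ (A i) := by
          rw [lintegral_finsetSum _ fun i _ => measurable_one.indicator (hA i)]
          exact sum_congr rfl fun i _ => lintegral_indicator_one (hA i)
  have hreal := ENNReal.toReal_mono (ENNReal.sum_ne_top.2 fun i _ => measure_ne_top μ (A i)) key
  rwa [ENNReal.toReal_mul, ENNReal.toReal_sum fun i _ => measure_ne_top μ (A i)] at hreal

namespace OneIndep

variable {V : Type*} {G : SimpleGraph V}

theorem openSubgraph_connected_of_subsingleton_closed [Nonempty V] (hG : G.IsEdgeConnected 2)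
    {ω : Config G} (hω : {e | ω e = false}.Subsingleton) : (openSubgraph G ω).Connected := by
  obtain ⟨e, he⟩ : ∃ e : Sym2 V, ∀ f : G.edgeSet, ω f = false → (f : Sym2 V) = e := by
    by_cases h : ∃ f, ω f = false
    · obtain ⟨f, hf⟩ := h
      exact ⟨f, fun g hg => congrArg Subtype.val (hω hg hf)⟩
    · exact ⟨s(Classical.arbitrary V, Classical.arbitrary V), fun g hg => (h ⟨g, hg⟩).elim⟩
  have hle : G.deleteEdges {e} ≤ openSubgraph G ω := by
    intro u v huv
    rw [SimpleGraph.deleteEdges_adj, Set.mem_singleton_iff] at huv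
    rw [openSubgraph, SimpleGraph.fromEdgeSet_adj]
    refine ⟨⟨huv.1, ?_⟩, huv.1.ne⟩
    by_contra hclosed
    exact huv.2 (he ⟨s(u, v), huv.1⟩ (by simpa using hclosed))
  exact ⟨(SimpleGraph.isEdgeConnected_two.1 hG e).mono hle⟩

theorem measureReal_openSubgraph_connected_ge [Nonempty V] [Fintype G.edgeSet]
    (hG : G.IsEdgeConnected 2) (μ : Measure (Config G)) [IsProbabilityMeasure μ] {p : ℝ}
    (hp : ∀ e : G.edgeSet, ENNReal.ofReal p ≤ μ {ω | ω e = true}) :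
    1 - #G.edgeFinset * (1 - p) / 2 ≤ μ.real {ω | (openSubgraph G ω).Connected} := by
  have hclosed : ∀ e : G.edgeSet, μ.real {ω | ω e = false} ≤ 1 - p := by
    intro e
    have hopen : p ≤ μ.real {ω | ω e = true} :=
      (ENNReal.ofReal_le_iff_le_toReal (measure_ne_top _ _)).1 (hp e)
    have hcompl : {ω : Config G | ω e = false} = {ω | ω e = true}ᶜ := by
      ext ω
      simp
    rw [hcompl, probReal_compl_eq_one_sub MeasurableSet.of_discrete]
    linarith
  have hdisconnected : {ω | (openSubgraph G ω).Connected}ᶜ ⊆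
      {ω : Config G | {e | ω e = false}.Nontrivial} := fun ω hω =>
    Set.not_subsingleton_iff.1 fun h => hω (openSubgraph_connected_of_subsingleton_closed hG h)
  have hsum : ∑ e : G.edgeSet, μ.real {ω | ω e = false} ≤ #G.edgeFinset * (1 - p) := by
    grw [sum_le_sum fun e _ => hclosed e]
    rw [sum_const, card_univ, SimpleGraph.edgeFinset_card, nsmul_eq_mul]
  have hmarkov := two_mul_measureReal_le_sum μ (A := fun e : G.edgeSet => {ω | ω e = false})
    fun _ => MeasurableSet.of_discrete
  simp only [Set.mem_ofPred_eq] at hmarkov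
  have hdisc := measureReal_mono (μ := μ) hdisconnected
  rw [probReal_compl_eq_one_sub MeasurableSet.of_discrete] at hdisc
  linarith

theorem dirac_mem_MGe [Countable G.edgeSet] (k : ℕ) {p : ℝ} (hp : p ≤ 1) :
    Measure.dirac (fun _ => true) ∈ MGe G k p :=
  ⟨inferInstance, fun _ _ _ _ _ => indep_dirac _ _ _, fun _ => by simpa using hp⟩

theorem connFun_ge_of_isEdgeConnected_two [Nonempty V] [Fintype G.edgeSet]
    (hG : G.IsEdgeConnected 2) (k : ℕ) {p : ℝ} (hp : p ≤ 1) :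
    1 - #G.edgeFinset * (1 - p) / 2 ≤ connFun G k p := by
  refine le_csInf ⟨_, _, dirac_mem_MGe k hp, rfl⟩ ?_
  rintro _ ⟨μ, ⟨_, -, hμ⟩, rfl⟩
  exact measureReal_openSubgraph_connected_ge hG μ hμ

theorem connFun_cycleGraph_ge (n : ℕ) (hn : 6 ≤ n) (p : ℝ) (hp : p ∈ Set.Icc (0:ℝ) 1) :
    (n * p - (n - 2)) / 2 ≤ connFun (SimpleGraph.cycleGraph n) 1 p := by
  obtain ⟨m, rfl⟩ : ∃ m, n = m + 3 := ⟨n - 3, by omega⟩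
  have h := connFun_ge_of_isEdgeConnected_two (SimpleGraph.cycleGraph_isEdgeConnected_two m) 1
    hp.2
  rw [SimpleGraph.card_edgeFinset_cycleGraph] at h
  push_cast at h ⊢
  linarith

end OneIndep
end
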